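/- arXiv:2003.14260 — 5 statements merged into one kernel-verified Lean document; each statement's English description precedes it below -/
import Mathlib

section
/- For real q ∈ (0,1), s, x with the relevant series convergent, ∑_{k=j_1}^{i_2} (y/x)^{k-j_1} · (y/x;q)_{i_2-k}/(q;q)_{i_2-k} · (-sx;q)_{k-j_1}/(q;q)_{k-j_1} = (-sy;q)_{i_2-j_1}/(q;q)_{i_2-j_1}, for all integers 0 ≤ j_1 ≤ i_2. -/
/-- The finite q-Pochhammer symbol `(a;q)_k = ∏_{m=0}^{k-1} (1 - a q^m)`. -/
noncomputable def qPoch (a q : ℝ) (k : ℕ) : ℝ :=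
  ∏ m ∈ Finset.range k, (1 - a * q ^ m)

lemma qPoch_zero (a q : ℝ) : qPoch a q 0 = 1 := rfl

lemma qPoch_succ (a q : ℝ) (k : ℕ) :
    qPoch a q (k + 1) = qPoch a q k * (1 - a * q ^ k) :=
  Finset.prod_range_succ _ _

lemma qq_pos {q : ℝ} (hq : q ∈ Set.Ioo (0 : ℝ) 1) (k : ℕ) : 0 < qPoch q q k := by
  induction k with
  | zero => norm_num [qPoch_zero]
  | succ k ih =>
    rw [qPoch_succ]
    have h1 : q * q ^ k < 1 := by
      have := pow_lt_one₀ (le_of_lt hq.1) hq.2 (Nat.succ_ne_zero k)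
      rwa [pow_succ'] at this
    nlinarith

lemma qq_ne {q : ℝ} (hq : q ∈ Set.Ioo (0 : ℝ) 1) (k : ℕ) : qPoch q q k ≠ 0 :=
  (qq_pos hq k).ne'

/-- Gaussian binomial coefficient as ratio of q-Pochhammers. -/
noncomputable def gb (q : ℝ) (n m : ℕ) : ℝ :=
  qPoch q q n / (qPoch q q m * qPoch q q (n - m))

lemma gb_zero {q : ℝ} (hq : q ∈ Set.Ioo (0 : ℝ) 1) (n : ℕ) : gb q n 0 = 1 := by
  simp [gb, qPoch_zero, div_self (qq_ne hq n)]

lemma gb_diag {q : ℝ} (hq : q ∈ Set.Ioo (0 : ℝ) 1) (n : ℕ) : gb q n n = 1 := by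
  simp [gb, Nat.sub_self, qPoch_zero, div_self (qq_ne hq n)]

lemma gb_pascal {q : ℝ} (hq : q ∈ Set.Ioo (0 : ℝ) 1) {n m : ℕ}
    (hm1 : 1 ≤ m) (hmn : m ≤ n) :
    gb q (n + 1) m = gb q n m + q ^ (n + 1 - m) * gb q n (m - 1) := by
  obtain ⟨m, rfl⟩ : ∃ m', m = m' + 1 := ⟨m - 1, by omega⟩
  obtain ⟨r, rfl⟩ : ∃ r, n = m + 1 + r := ⟨n - (m + 1), by omega⟩
  have e1 : m + 1 + r + 1 - (m + 1) = r + 1 := by omega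
  have e2 : m + 1 + r - (m + 1) = r := by omega
  have e3 : m + 1 + r - m = r + 1 := by omega
  have e4 : m + 1 - 1 = m := by omega
  rw [gb, gb, gb, e1, e2, e4, e3]
  rw [qPoch_succ q q (m + 1 + r), qPoch_succ q q m, qPoch_succ q q r]
  have hQn := qq_ne hq (m + 1 + r)
  have hQm := qq_ne hq m
  have hQm1 : (1 - q * q ^ m) ≠ 0 := by
    have h1 : q * q ^ m < 1 := by
      have := pow_lt_one₀ (le_of_lt hq.1) hq.2 (Nat.succ_ne_zero m)
      rwa [pow_succ'] at this
    intro hc; nlinarith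
  have hQr := qq_ne hq r
  have hQr1 : (1 - q * q ^ r) ≠ 0 := by
    have h1 : q * q ^ r < 1 := by
      have := pow_lt_one₀ (le_of_lt hq.1) hq.2 (Nat.succ_ne_zero r)
      rwa [pow_succ'] at this
    intro hc; nlinarith
  have hpow : q * q ^ (m + 1 + r) = (q * q ^ m) * (q * q ^ r) := by
    rw [pow_add, pow_add]
    ring
  field_simp
  rw [hpow, pow_succ']
  ring

lemma key_sum {q : ℝ} (hq : q ∈ Set.Ioo (0 : ℝ) 1) (a b : ℝ) (n : ℕ) :
    ∑ m ∈ Finset.range (n + 1),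
        gb q n m * a ^ m * qPoch a q (n - m) * qPoch b q m
      = qPoch (a * b) q n := by
  induction n with
  | zero => simp [gb_zero hq, qPoch_zero]
  | succ n ih =>
    set u : ℕ → ℝ := fun j => gb q n j * a ^ j * qPoch a q (n + 1 - j) * qPoch b q j with hu
    set v : ℕ → ℝ := fun m =>
      q ^ (n - m) * gb q n m * a ^ (m + 1) * qPoch a q (n - m) * qPoch b q (m + 1) with hv
    have claimA :
        ∑ m ∈ Finset.range (n + 1 + 1),
            gb q (n + 1) m * a ^ m * qPoch a q (n + 1 - m) * qPoch b q m
          = ∑ j ∈ Finset.range (n + 1), u j + ∑ m ∈ Finset.range (n + 1), v m := by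
      rw [Finset.sum_range_succ']
      rw [Finset.sum_range_succ]
      have hmid : ∀ m ∈ Finset.range n,
          gb q (n + 1) (m + 1) * a ^ (m + 1) * qPoch a q (n + 1 - (m + 1)) * qPoch b q (m + 1)
            = u (m + 1) + v m := by
        intro m hm
        have hmn : m + 1 ≤ n := by
          have := Finset.mem_range.mp hm; omega
        rw [gb_pascal hq (by omega) hmn]
        have e1 : n + 1 - (m + 1) = n - m := by omega
        have e2 : m + 1 - 1 = m := by omega
        rw [e1, e2, hu, hv]
        have e3 : n + 1 - (m + 1) = n - m := by omega
        simp only [e3]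
        ring
      rw [Finset.sum_congr rfl hmid, Finset.sum_add_distrib]
      have hlast :
          gb q (n + 1) (n + 1) * a ^ (n + 1) * qPoch a q (n + 1 - (n + 1)) * qPoch b q (n + 1)
            = v n := by
        rw [gb_diag hq, hv]
        simp [gb_diag hq, Nat.sub_self, qPoch_zero]
      have hfirst :
          gb q (n + 1) 0 * a ^ 0 * qPoch a q (n + 1 - 0) * qPoch b q 0 = u 0 := by
        rw [gb_zero hq, hu]
        simp [gb_zero hq]
      rw [hlast, hfirst]
      rw [Finset.sum_range_succ' u, Finset.sum_range_succ v]
      ring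
    rw [claimA, ← Finset.sum_add_distrib]
    have claimB : ∀ j ∈ Finset.range (n + 1),
        u j + v j = (1 - a * b * q ^ n) *
          (gb q n j * a ^ j * qPoch a q (n - j) * qPoch b q j) := by
      intro j hj
      have hjn : j ≤ n := by have := Finset.mem_range.mp hj; omega
      have e1 : n + 1 - j = (n - j) + 1 := by omega
      rw [hu, hv]
      simp only
      rw [e1, qPoch_succ a q (n - j), qPoch_succ b q j]
      have hq2 : q ^ (n - j) * q ^ j = q ^ n := by
        rw [← pow_add]; congr 1; omega
      rw [← hq2]
      ring
    rw [Finset.sum_congr rfl claimB, ← Finset.mul_sum, ih, qPoch_succ]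
    ring

/-- The corner Yang–Baxter summation identity for spin q-Whittaker weights:
for `0 ≤ j₁ ≤ i₂`,
`∑_{k=j₁}^{i₂} (y/x)^{k-j₁} (y/x;q)_{i₂-k}/(q;q)_{i₂-k} (-sx;q)_{k-j₁}/(q;q)_{k-j₁}
  = (-sy;q)_{i₂-j₁}/(q;q)_{i₂-j₁}`. -/
theorem corner_YBE_sum (q s x y : ℝ) (hq : q ∈ Set.Ioo (0 : ℝ) 1) (hx : x ≠ 0)
    (j₁ i₂ : ℕ) (h : j₁ ≤ i₂) :
    ∑ k ∈ Finset.Icc j₁ i₂,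
      (y / x) ^ (k - j₁) * (qPoch (y / x) q (i₂ - k) / qPoch q q (i₂ - k))
        * (qPoch (-s * x) q (k - j₁) / qPoch q q (k - j₁))
    = qPoch (-s * y) q (i₂ - j₁) / qPoch q q (i₂ - j₁) := by
  set a : ℝ := y / x
  set b : ℝ := -s * x
  have hab : a * b = -s * y := by
    have h0 : a * b = -s * y * (x / x) := by ring
    rw [h0, div_self hx, mul_one]
  set n : ℕ := i₂ - j₁ with hn
  rw [← Finset.Ico_add_one_right_eq_Icc, Finset.sum_Ico_eq_sum_range]
  have hrange : i₂ + 1 - j₁ = n + 1 := by omega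
  rw [hrange]
  have hterm : ∀ m ∈ Finset.range (n + 1),
      a ^ (j₁ + m - j₁) * (qPoch a q (i₂ - (j₁ + m)) / qPoch q q (i₂ - (j₁ + m)))
        * (qPoch b q (j₁ + m - j₁) / qPoch q q (j₁ + m - j₁))
      = gb q n m * a ^ m * qPoch a q (n - m) * qPoch b q m / qPoch q q n := by
    intro m hm
    have hmn : m ≤ n := by have := Finset.mem_range.mp hm; omega
    have e1 : j₁ + m - j₁ = m := by omega
    have e2 : i₂ - (j₁ + m) = n - m := by omega
    rw [e1, e2, gb]
    have h1 := qq_ne hq n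
    have h2 := qq_ne hq m
    have h3 := qq_ne hq (n - m)
    field_simp
  rw [Finset.sum_congr rfl hterm, ← Finset.sum_div, key_sum hq a b n, hab]
end

section
/- Let A, B > 0. Then lim_{q→1⁻} (ℓ q^A; q)_∞ / (ℓ q^B; q)_∞ = (1-ℓ)^{B-A}, uniformly for ℓ in any compact subset of (0,1). -/
/-- The infinite q-Pochhammer symbol `(x;q)_∞ = ∏_{k=0}^{∞} (1 - x q^k)`. -/
noncomputable def qPochInf (x q : ℝ) : ℝ :=
  ∏' k : ℕ, (1 - x * q ^ k)

/-!
With `g t = log (ℓ q^t; q)_∞ = ∑ₖ log (1 - ℓ q^k q^t)`, the function `g` is concave in `t`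
(each summand is `log` of a concave function) and `g t - g (t + 1) = log (1 - ℓ q^t)`.
Comparing the secant slope of `g` on `[A, B]` with its slopes on `[A - 1, A]` and `[B, B + 1]`
traps the ratio between `(1 - ℓ q^(A-1))^(B-A)` and `(1 - ℓ q^B)^(B-A)`. Both bounds are
continuous in `(q, ℓ)` and equal `(1 - ℓ)^(B-A)` at `q = 1`, so compactness of `K` makes the
convergence uniform.
-/

open Real Filter Set Topology

theorem TendstoUniformlyOn.of_mem_uIcc {ι α : Type*} {p : Filter ι} {s : Set α}
    {F G H : ι → α → ℝ} {f : α → ℝ} (hG : TendstoUniformlyOn G f p s)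
    (hH : TendstoUniformlyOn H f p s) (hF : ∀ᶠ i in p, ∀ x ∈ s, F i x ∈ uIcc (G i x) (H i x)) :
    TendstoUniformlyOn F f p s := by
  rw [Metric.tendstoUniformlyOn_iff] at hG hH ⊢
  intro ε hε
  filter_upwards [hG ε hε, hH ε hε, hF] with i hGi hHi hFi x hx
  have hball : (Metric.ball (f x) ε).OrdConnected := by
    rw [Real.ball_eq_Ioo]; exact ordConnected_Ioo
  exact Metric.mem_ball'.1 <|
    hball.uIcc_subset (Metric.mem_ball'.2 (hGi x hx)) (Metric.mem_ball'.2 (hHi x hx)) (hFi x hx)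

theorem tendstoUniformlyOn_of_continuousAt {X Y E : Type*} [TopologicalSpace X]
    [TopologicalSpace Y] [PseudoMetricSpace E] {f : X → Y → E} {x₀ : X} {K : Set Y}
    (hK : IsCompact K) (hf : ∀ y ∈ K, ContinuousAt ↿f (x₀, y)) :
    TendstoUniformlyOn f (f x₀) (𝓝 x₀) K := by
  rw [Metric.tendstoUniformlyOn_iff]
  intro ε hε
  refine hK.eventually_forall_of_forall_eventually fun y hy => ?_
  have hnear : ∀ᶠ z in 𝓝 (x₀, y), dist (↿f z) (f x₀ y) < ε / 2 :=
    (hf y hy).eventually (Metric.ball_mem_nhds _ (half_pos hε))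
  have hfiber : Tendsto (fun z : X × Y => (x₀, z.2)) (𝓝 (x₀, y)) (𝓝 (x₀, y)) :=
    (continuous_const.prodMk continuous_snd).tendsto' _ _ rfl
  filter_upwards [hnear, hfiber.eventually hnear] with z hz hz'
  calc dist (f x₀ z.2) (f z.1 z.2) ≤ dist (f x₀ z.2) (f x₀ y) + dist (f z.1 z.2) (f x₀ y) :=
        dist_triangle_right _ _ _
    _ < ε / 2 + ε / 2 := add_lt_add hz' hz
    _ = ε := add_halves ε

theorem ConcaveOn.tsum {ι E : Type*} [AddCommMonoid E] [Module ℝ E] {s : Set E}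
    {f : ι → E → ℝ} (hs : Convex ℝ s) (hf : ∀ i, ConcaveOn ℝ s (f i))
    (hsum : ∀ x ∈ s, Summable fun i => f i x) : ConcaveOn ℝ s fun x => ∑' i, f i x := by
  refine ⟨hs, fun x hx y hy a b ha hb hab => ?_⟩
  simp only [smul_eq_mul]
  rw [← tsum_mul_left, ← tsum_mul_left,
    ← ((hsum x hx).mul_left a).tsum_add ((hsum y hy).mul_left b)]
  exact Summable.tsum_le_tsum (fun i => (hf i).2 hx hy ha hb hab)
    (((hsum x hx).mul_left a).add ((hsum y hy).mul_left b)) (hsum _ (hs hx hy ha hb hab))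

theorem ConcaveOn.sub_mem_Icc_of_unit_steps {g : ℝ → ℝ} {s : Set ℝ} (hg : ConcaveOn ℝ s g)
    {a b : ℝ} (ha : a - 1 ∈ s) (hb : b + 1 ∈ s) (hab : a ≤ b) :
    g b - g a ∈ Icc ((b - a) * (g (b + 1) - g b)) ((b - a) * (g a - g (a - 1))) := by
  rcases hab.eq_or_lt with rfl | hab
  · simp
  have hmem : ∀ t ∈ Icc (a - 1) (b + 1), t ∈ s := hg.1.ordConnected.out ha hb
  have hleft := hg.slope_anti_adjacent ha (hmem b ⟨by linarith, by linarith⟩)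
    (sub_one_lt a) hab
  have hright := hg.slope_anti_adjacent (hmem a ⟨by linarith, by linarith⟩) hb
    hab (lt_add_one b)
  rw [sub_sub_cancel, div_one, div_le_iff₀ (sub_pos.2 hab)] at hleft
  rw [add_sub_cancel_left, div_one, le_div_iff₀ (sub_pos.2 hab)] at hright
  exact ⟨by linarith, by linarith⟩

noncomputable def logQPochInf (x q : ℝ) : ℝ :=
  ∑' k : ℕ, log (1 - x * q ^ k)

section logQPochInf

variable {q : ℝ}

theorem summable_log_one_sub_mul_pow (x : ℝ) (hq : |q| < 1) :
    Summable fun k : ℕ => log (1 - x * q ^ k) := by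
  simpa only [sub_eq_add_neg, neg_mul] using
    Real.summable_log_one_add_of_summable ((summable_geometric_of_abs_lt_one hq).mul_left (-x))

theorem qPochInf_eq_exp_logQPochInf {x : ℝ} (hx : x < 1) (hq0 : 0 ≤ q) (hq1 : q < 1) :
    qPochInf x q = exp (logQPochInf x q) := by
  have hpos : ∀ k : ℕ, 0 < 1 - x * q ^ k := fun k => by
    rcases le_or_gt x 0 with hx0 | hx0
    · nlinarith [pow_nonneg hq0 k]
    · nlinarith [pow_le_one₀ hq0 hq1.le (n := k)]
  exact (rexp_tsum_eq_tprod hpos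
    (summable_log_one_sub_mul_pow x (by rwa [abs_of_nonneg hq0]))).symm

theorem logQPochInf_eq_log_add (x : ℝ) (hq : |q| < 1) :
    logQPochInf x q = log (1 - x) + logQPochInf (x * q) q := by
  rw [logQPochInf, (summable_log_one_sub_mul_pow x hq).tsum_eq_zero_add]
  simp only [pow_zero, mul_one, pow_succ', logQPochInf, mul_assoc]

theorem concaveOn_log_one_sub_mul_rpow {ℓ τ : ℝ} (hℓ : 0 ≤ ℓ) (hq0 : 0 < q) (hq1 : q ≤ 1)
    (hτ : ℓ * q ^ τ < 1) : ConcaveOn ℝ (Ici τ) fun t => log (1 - ℓ * q ^ t) := by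
  have hpos : ∀ t ∈ Ici τ, 0 < 1 - ℓ * q ^ t := fun t ht => by
    have := mul_le_mul_of_nonneg_left (rpow_le_rpow_of_exponent_ge hq0 hq1 ht) hℓ
    linarith
  have hlin : ConcaveOn ℝ (Ici τ) fun t => 1 - ℓ * q ^ t :=
    concaveOn_const _ (convex_Ici τ) |>.sub
      (((convexOn_rpow_left hq0).subset (subset_univ _) (convex_Ici τ)).smul hℓ)
  refine ⟨convex_Ici τ, fun s hs t ht a b ha hb hab => ?_⟩
  calc a • log (1 - ℓ * q ^ s) + b • log (1 - ℓ * q ^ t)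
      ≤ log (a • (1 - ℓ * q ^ s) + b • (1 - ℓ * q ^ t)) :=
        strictConcaveOn_log_Ioi.concaveOn.2 (hpos s hs) (hpos t ht) ha hb hab
    _ ≤ log (1 - ℓ * q ^ (a • s + b • t)) :=
        log_le_log (convex_Ioi (0 : ℝ) (hpos s hs) (hpos t ht) ha hb hab) (hlin.2 hs ht ha hb hab)

theorem concaveOn_logQPochInf_mul_rpow {ℓ τ : ℝ} (hℓ : 0 ≤ ℓ) (hq0 : 0 < q) (hq1 : q < 1)
    (hτ : ℓ * q ^ τ < 1) : ConcaveOn ℝ (Ici τ) fun t => logQPochInf (ℓ * q ^ t) q := by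
  have hq : |q| < 1 := by rwa [abs_of_pos hq0]
  refine ConcaveOn.tsum (convex_Ici τ) (fun k => ?_)
    (fun t _ => summable_log_one_sub_mul_pow _ hq)
  have hk : ℓ * q ^ k * q ^ τ < 1 :=
    (mul_le_mul_of_nonneg_right (mul_le_of_le_one_right hℓ (pow_le_one₀ hq0.le hq1.le))
      (rpow_nonneg hq0.le τ)).trans_lt hτ
  simpa only [mul_right_comm ℓ] using
    concaveOn_log_one_sub_mul_rpow (by positivity) hq0 hq1.le hk

theorem logQPochInf_mul_rpow_sub_mem_Icc {ℓ A B : ℝ} (hℓ : 0 ≤ ℓ) (hq0 : 0 < q) (hq1 : q < 1)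
    (hAB : A ≤ B) (hA : ℓ * q ^ (A - 1) < 1) :
    logQPochInf (ℓ * q ^ A) q - logQPochInf (ℓ * q ^ B) q ∈
      Icc ((B - A) * log (1 - ℓ * q ^ (A - 1))) ((B - A) * log (1 - ℓ * q ^ B)) := by
  set g : ℝ → ℝ := fun t => logQPochInf (ℓ * q ^ t) q
  have hstep : ∀ t, g t - g (t + 1) = log (1 - ℓ * q ^ t) := fun t => by
    simp only [g, rpow_add_one hq0.ne', ← mul_assoc,
      logQPochInf_eq_log_add (ℓ * q ^ t) (by rwa [abs_of_pos hq0] : |q| < 1), add_sub_cancel_right]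
  obtain ⟨hlow, hupp⟩ := (concaveOn_logQPochInf_mul_rpow hℓ hq0 hq1 hA).sub_mem_Icc_of_unit_steps
    (a := A) (b := B) (mem_Ici.2 le_rfl) (by simp only [mem_Ici]; linarith) hAB
  have hA' := hstep (A - 1)
  rw [sub_add_cancel] at hA'
  rw [← hA', ← hstep B]
  exact ⟨by linarith, by linarith⟩

theorem logQPochInf_mul_rpow_sub_mem_uIcc {ℓ : ℝ} (hℓ : 0 ≤ ℓ) (hq0 : 0 < q) (hq1 : q < 1)
    (A B : ℝ) (h : ℓ * q ^ (min A B - 1) < 1) :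
    logQPochInf (ℓ * q ^ A) q - logQPochInf (ℓ * q ^ B) q ∈
      uIcc ((B - A) * log (1 - ℓ * q ^ (min A B - 1))) ((B - A) * log (1 - ℓ * q ^ max A B)) := by
  rcases le_total A B with hAB | hBA
  · rw [min_eq_left hAB] at h ⊢
    rw [max_eq_right hAB]
    exact Icc_subset_uIcc (logQPochInf_mul_rpow_sub_mem_Icc hℓ hq0 hq1 hAB h)
  · rw [min_eq_right hBA] at h ⊢
    rw [max_eq_left hBA]
    obtain ⟨hlow, hupp⟩ := logQPochInf_mul_rpow_sub_mem_Icc hℓ hq0 hq1 hBA h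
    refine Icc_subset_uIcc' ⟨?_, ?_⟩ <;> linarith

theorem qPochInf_mul_rpow_div_mem_uIcc {ℓ : ℝ} (hℓ : 0 ≤ ℓ) (hq0 : 0 < q) (hq1 : q < 1)
    (A B : ℝ) (h : ℓ * q ^ (min A B - 1) < 1) :
    qPochInf (ℓ * q ^ A) q / qPochInf (ℓ * q ^ B) q ∈
      uIcc ((1 - ℓ * q ^ (min A B - 1)) ^ (B - A)) ((1 - ℓ * q ^ max A B) ^ (B - A)) := by
  have hlt : ∀ c, min A B - 1 ≤ c → ℓ * q ^ c < 1 := fun c hc =>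
    (mul_le_mul_of_nonneg_left (rpow_le_rpow_of_exponent_ge hq0 hq1.le hc) hℓ).trans_lt h
  rw [qPochInf_eq_exp_logQPochInf (hlt A (by linarith [min_le_left A B])) hq0.le hq1,
    qPochInf_eq_exp_logQPochInf (hlt B (by linarith [min_le_right A B])) hq0.le hq1, ← exp_sub,
    rpow_def_of_pos (sub_pos.2 h),
    rpow_def_of_pos (sub_pos.2 (hlt _ (by linarith [min_le_max (a := A) (b := B)]))),
    mul_comm (log _), mul_comm (log _)]
  exact exp_monotone.mapsTo_uIcc (logQPochInf_mul_rpow_sub_mem_uIcc hℓ hq0 hq1 A B h)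

end logQPochInf

theorem eventually_forall_mul_rpow_lt_one (c : ℝ) {K : Set ℝ} (hK : K ⊆ Iio 1)
    (hKc : IsCompact K) : ∀ᶠ q in 𝓝 1, ∀ ℓ ∈ K, ℓ * q ^ c < 1 := by
  refine hKc.eventually_forall_of_forall_eventually fun ℓ hℓ => ?_
  have hcont : ContinuousAt (fun z : ℝ × ℝ => z.2 * z.1 ^ c) (1, ℓ) :=
    continuousAt_snd.mul (continuousAt_fst.rpow_const (Or.inl one_ne_zero))
  exact hcont.eventually_lt continuousAt_const (by simpa using hK hℓ)

theorem tendstoUniformlyOn_one_sub_mul_rpow_rpow (c p : ℝ) {K : Set ℝ} (hK : K ⊆ Iio 1)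
    (hKc : IsCompact K) :
    TendstoUniformlyOn (fun q ℓ => (1 - ℓ * q ^ c) ^ p) (fun ℓ => (1 - ℓ) ^ p) (𝓝 1) K := by
  refine (tendstoUniformlyOn_of_continuousAt hKc fun ℓ hℓ => ?_).congr_right
    (fun ℓ _ => by simp only [one_rpow, mul_one])
  have hbase : (1 : ℝ) - ℓ * 1 ^ c ≠ 0 := by
    rw [one_rpow, mul_one]; exact (sub_pos.2 (hK hℓ)).ne'
  exact (continuousAt_const.sub (continuousAt_snd.mul
    (continuousAt_fst.rpow_const (Or.inl one_ne_zero)))).rpow_const (Or.inl hbase)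

theorem qPochInf_ratio_tendsto_general (A B : ℝ)
    (K : Set ℝ) (hK : K ⊆ Set.Ioo (0 : ℝ) 1) (hKc : IsCompact K) :
    TendstoUniformlyOn
      (fun (q : ℝ) (ℓ : ℝ) => qPochInf (ℓ * q ^ A) q / qPochInf (ℓ * q ^ B) q)
      (fun ℓ : ℝ => (1 - ℓ) ^ (B - A))
      (nhdsWithin 1 (Set.Ioo (0 : ℝ) 1)) K := by
  have hK1 : K ⊆ Iio 1 := hK.trans Ioo_subset_Iio_self
  have hend : ∀ c : ℝ, TendstoUniformlyOn (fun q ℓ => (1 - ℓ * q ^ c) ^ (B - A))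
      (fun ℓ => (1 - ℓ) ^ (B - A)) (𝓝[Ioo 0 1] 1) K := fun c u hu =>
    nhdsWithin_le_nhds (tendstoUniformlyOn_one_sub_mul_rpow_rpow c (B - A) hK1 hKc u hu)
  refine (hend (min A B - 1)).of_mem_uIcc (hend (max A B)) ?_
  filter_upwards [nhdsWithin_le_nhds (eventually_forall_mul_rpow_lt_one (min A B - 1) hK1 hKc),
    self_mem_nhdsWithin] with q hq ⟨hq0, hq1⟩ ℓ hℓ
  exact qPochInf_mul_rpow_div_mem_uIcc (hK hℓ).1.le hq0 hq1 A B (hq ℓ hℓ)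

/-- As `q → 1⁻`, `(ℓ q^A;q)_∞ / (ℓ q^B;q)_∞ → (1-ℓ)^{B-A}`, uniformly for `ℓ`
in any compact subset of `(0,1)`. -/
theorem qPochInf_ratio_tendsto (A B : ℝ) (hA : 0 < A) (hB : 0 < B)
    (K : Set ℝ) (hK : K ⊆ Set.Ioo (0 : ℝ) 1) (hKc : IsCompact K) :
    TendstoUniformlyOn
      (fun (q : ℝ) (ℓ : ℝ) => qPochInf (ℓ * q ^ A) q / qPochInf (ℓ * q ^ B) q)
      (fun ℓ : ℝ => (1 - ℓ) ^ (B - A))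
      (nhdsWithin 1 (Set.Ioo (0 : ℝ) 1)) K :=
  qPochInf_ratio_tendsto_general A B K hK hKc
end

section
/- Let S > 0 and X real with |X| < S, and 1 ≤ ℓ₃ < ℓ₁. Define A_{S,X}(ℓ₃,ℓ₂,ℓ₁) = (1/B(S+X,S-X)) · (1 − ℓ₂/ℓ₁)^{S−X−1} (1 − ℓ₃/ℓ₂)^{S+X−1} (1 − ℓ₃/ℓ₁)^{1−2S}, where B is the Euler beta function. Then for any left-continuous function f on ℝ_{≥1}, lim_{ℓ₃ → ℓ₁⁻} ∫_{ℓ₃}^{ℓ₁} (dℓ₂/ℓ₂) A_{S,X}(ℓ₃,ℓ₂,ℓ₁) f(ℓ₂) = f(ℓ₁). -/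
set_option maxHeartbeats 1000000

open MeasureTheory Set Filter

noncomputable def realBeta (a b : ℝ) : ℝ :=
  Real.Gamma a * Real.Gamma b / Real.Gamma (a + b)

noncomputable def kerA (S X ℓ₃ ℓ₂ ℓ₁ : ℝ) : ℝ :=
  (1 / realBeta (S + X) (S - X)) * (1 - ℓ₂ / ℓ₁) ^ (S - X - 1)
    * (1 - ℓ₃ / ℓ₂) ^ (S + X - 1) * (1 - ℓ₃ / ℓ₁) ^ (1 - 2 * S)

lemma betaFn_integrableOn {a b : ℝ} (ha : 0 < a) (hb : 0 < b) :
    IntegrableOn (fun t : ℝ => t ^ (a - 1) * (1 - t) ^ (b - 1)) (Ioo 0 1) := by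
  have h := (Complex.betaIntegral_convergent (u := (a : ℂ)) (v := (b : ℂ))
    (by simpa using ha) (by simpa using hb)).1
  have h' : IntegrableOn (fun x : ℝ =>
      Complex.re ((x : ℂ) ^ ((a : ℂ) - 1) * (1 - (x : ℂ)) ^ ((b : ℂ) - 1))) (Ioc 0 1) := by
    exact h.re
  refine (h'.mono_set Ioo_subset_Ioc_self).congr_fun ?_ measurableSet_Ioo
  intro x hx
  have hx0 : (0:ℝ) ≤ x := hx.1.le
  have hx1 : (0:ℝ) ≤ 1 - x := by linarith [hx.2]
  show Complex.re _ = _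
  have e1 : ((a:ℂ)-1) = ((a-1:ℝ):ℂ) := by push_cast; ring
  have e2 : ((b:ℂ)-1) = ((b-1:ℝ):ℂ) := by push_cast; ring
  have e3 : (1 - (x:ℂ)) = ((1-x:ℝ):ℂ) := by push_cast; ring
  rw [e1, e2, e3, ← Complex.ofReal_cpow hx0, ← Complex.ofReal_cpow hx1,
    ← Complex.ofReal_mul, Complex.ofReal_re]

lemma betaFn_integral {a b : ℝ} (ha : 0 < a) (hb : 0 < b) :
    ∫ t in Ioo (0:ℝ) 1, t ^ (a - 1) * (1 - t) ^ (b - 1) = realBeta a b := by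
  have key : Complex.betaIntegral (a:ℂ) (b:ℂ)
      = ((∫ t in (0:ℝ)..1, t ^ (a - 1) * (1 - t) ^ (b - 1) : ℝ) : ℂ) := by
    rw [Complex.betaIntegral, ← intervalIntegral.integral_ofReal]
    refine intervalIntegral.integral_congr ?_
    intro x hx
    rw [uIcc_of_le (by norm_num)] at hx
    have hx0 : (0:ℝ) ≤ x := hx.1
    have hx1 : (0:ℝ) ≤ 1 - x := by linarith [hx.2]
    have e1 : ((a:ℂ)-1) = ((a-1:ℝ):ℂ) := by push_cast; ring
    have e2 : ((b:ℂ)-1) = ((b-1:ℝ):ℂ) := by push_cast; ring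
    have e3 : (1 - (x:ℂ)) = ((1-x:ℝ):ℂ) := by push_cast; ring
    show _ = _
    simp only []
    rw [e1, e2, e3, ← Complex.ofReal_cpow hx0, ← Complex.ofReal_cpow hx1,
      ← Complex.ofReal_mul]
  have hc := Complex.Gamma_mul_Gamma_eq_betaIntegral (s := (a:ℂ)) (t := (b:ℂ))
    (by simpa using ha) (by simpa using hb)
  rw [key] at hc
  have hab : ((a:ℂ) + (b:ℂ)) = ((a+b:ℝ):ℂ) := by push_cast; ring
  rw [hab, Complex.Gamma_ofReal, Complex.Gamma_ofReal, Complex.Gamma_ofReal,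
    ← Complex.ofReal_mul, ← Complex.ofReal_mul] at hc
  have hr : Real.Gamma a * Real.Gamma b
      = Real.Gamma (a+b) * ∫ t in (0:ℝ)..1, t ^ (a - 1) * (1 - t) ^ (b - 1) :=
    Complex.ofReal_injective hc
  have hG : Real.Gamma (a+b) ≠ 0 := (Real.Gamma_pos_of_pos (by linarith)).ne'
  have : ∫ t in (0:ℝ)..1, t ^ (a - 1) * (1 - t) ^ (b - 1) = realBeta a b := by
    rw [realBeta]; field_simp at hr ⊢; linarith [hr]
  rw [← this, intervalIntegral.integral_of_le (by norm_num : (0:ℝ) ≤ 1),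
    MeasureTheory.integral_Ioc_eq_integral_Ioo]

/-- measurability of a left-continuous function composed with a measurable map. -/
lemma aemeasurable_comp_of_leftCont (f : ℝ → ℝ)
    (hf : ∀ x : ℝ, 1 ≤ x → ContinuousWithinAt f (Set.Iic x) x)
    {φ : ℝ → ℝ} (hφ : Measurable φ) {s : Set ℝ} (hs : MeasurableSet s)
    (hφ1 : ∀ x ∈ s, 1 ≤ φ x) :
    AEMeasurable (fun x => f (φ x)) (volume.restrict s) := by
  have hfn : ∀ n : ℕ, Measurable (fun y : ℝ => f ((⌊y * ((n:ℝ)+1)⌋ : ℤ) / ((n:ℝ)+1))) :=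
    fun n => (measurable_of_countable (fun k : ℤ => f ((k : ℝ) / ((n:ℝ)+1)))).comp
      (Int.measurable_floor.comp (measurable_id.mul_const _))
  have key : ∀ y : ℝ, 1 ≤ y →
      Tendsto (fun n : ℕ => f ((⌊y * ((n:ℝ)+1)⌋ : ℤ) / ((n:ℝ)+1))) atTop (nhds (f y)) := by
    intro y hy
    set g : ℕ → ℝ := fun n => ((⌊y * ((n:ℝ)+1)⌋ : ℤ) : ℝ) / ((n:ℝ)+1) with hg
    have hpos : ∀ n : ℕ, (0:ℝ) < (n:ℝ)+1 := fun n => by positivity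
    have hle : ∀ n : ℕ, g n ≤ y := by
      intro n
      rw [hg, div_le_iff₀ (hpos n)]
      exact Int.floor_le _
    have hgt : ∀ n : ℕ, y - 1/((n:ℝ)+1) ≤ g n := by
      intro n
      rw [hg, le_div_iff₀ (hpos n)]
      have h1 := Int.sub_one_lt_floor (y * ((n:ℝ)+1))
      have h2 : (1/((n:ℝ)+1))*((n:ℝ)+1) = 1 := by field_simp
      nlinarith [h1, h2]
    have hg_tendsto : Tendsto g atTop (nhds y) := by
      have h1 : Tendsto (fun n : ℕ => y - 1/((n:ℝ)+1)) atTop (nhds y) := by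
        have := tendsto_one_div_add_atTop_nhds_zero_nat (𝕜 := ℝ)
        have := (tendsto_const_nhds (x := y) (f := atTop (α := ℕ))).sub this
        simpa using this
      exact tendsto_of_tendsto_of_tendsto_of_le_of_le h1 tendsto_const_nhds hgt hle
    have hg_within : Tendsto g atTop (nhdsWithin y (Set.Iic y)) :=
      tendsto_nhdsWithin_of_tendsto_nhds_of_eventually_within _ hg_tendsto
        (Eventually.of_forall hle)
    exact (hf y hy).tendsto.comp hg_within
  refine aemeasurable_of_tendsto_metrizable_ae (atTop : Filter ℕ)
    (f := fun (n : ℕ) (x : ℝ) => f ((⌊φ x * ((n:ℝ)+1)⌋ : ℤ) / ((n:ℝ)+1))) ?_ ?_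
  · exact fun n => ((hfn n).comp hφ).aemeasurable
  · rw [ae_restrict_iff' hs]
    exact Eventually.of_forall fun x hx => key (φ x) (hφ1 x hx)

section subst

variable {S X ℓ₃ ℓ₁ : ℝ}

lemma P_mem (h0 : 0 < ℓ₃) (h3 : ℓ₃ < ℓ₁) {t : ℝ} (ht : t ∈ Ioo (0:ℝ) 1) :
    ℓ₁ - t * (ℓ₁ - ℓ₃) ∈ Ioo ℓ₃ ℓ₁ := by
  obtain ⟨ht0, ht1⟩ := ht
  constructor <;> nlinarith

lemma phi_mem (h0 : 0 < ℓ₃) (h3 : ℓ₃ < ℓ₁) {t : ℝ} (ht : t ∈ Ioo (0:ℝ) 1) :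
    ℓ₁ * ℓ₃ / (ℓ₁ - t * (ℓ₁ - ℓ₃)) ∈ Ioo ℓ₃ ℓ₁ := by
  have hP := P_mem h0 h3 ht
  have hP0 : 0 < ℓ₁ - t * (ℓ₁ - ℓ₃) := h0.trans hP.1
  constructor
  · rw [lt_div_iff₀ hP0]; nlinarith [hP.2]
  · rw [div_lt_iff₀ hP0]; nlinarith [hP.1]

lemma phi_image (h0 : 0 < ℓ₃) (h3 : ℓ₃ < ℓ₁) :
    (fun t : ℝ => ℓ₁ * ℓ₃ / (ℓ₁ - t * (ℓ₁ - ℓ₃))) '' Ioo 0 1 = Ioo ℓ₃ ℓ₁ := by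
  have hl1 : (0:ℝ) < ℓ₁ := h0.trans h3
  ext y
  constructor
  · rintro ⟨t, ht, rfl⟩
    exact phi_mem h0 h3 ht
  · rintro ⟨hy1, hy2⟩
    have hy0 : 0 < y := h0.trans hy1
    have hD : 0 < ℓ₁ - ℓ₃ := by linarith
    refine ⟨(ℓ₁ - ℓ₁*ℓ₃/y)/(ℓ₁-ℓ₃), ⟨?_, ?_⟩, ?_⟩
    · apply div_pos _ hD
      rw [sub_pos, div_lt_iff₀ hy0]; nlinarith
    · rw [div_lt_one hD, sub_lt_sub_iff_left, lt_div_iff₀ hy0]; nlinarith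
    · show ℓ₁ * ℓ₃ / (ℓ₁ - (ℓ₁ - ℓ₁*ℓ₃/y)/(ℓ₁-ℓ₃) * (ℓ₁ - ℓ₃)) = y
      have hne : ℓ₁ - (ℓ₁ - ℓ₁*ℓ₃/y)/(ℓ₁-ℓ₃) * (ℓ₁ - ℓ₃) = ℓ₁*ℓ₃/y := by
        field_simp; ring
      rw [hne]
      field_simp

lemma phi_injOn (h0 : 0 < ℓ₃) (h3 : ℓ₃ < ℓ₁) :
    InjOn (fun t : ℝ => ℓ₁ * ℓ₃ / (ℓ₁ - t * (ℓ₁ - ℓ₃))) (Ioo 0 1) := by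
  intro s hs t ht h
  have hPs : 0 < ℓ₁ - s * (ℓ₁ - ℓ₃) := h0.trans (P_mem h0 h3 hs).1
  have hPt : 0 < ℓ₁ - t * (ℓ₁ - ℓ₃) := h0.trans (P_mem h0 h3 ht).1
  have hc : (0:ℝ) < ℓ₁ * ℓ₃ := mul_pos (h0.trans h3) h0
  simp only at h
  rw [div_eq_div_iff hPs.ne' hPt.ne'] at h
  have hP : ℓ₁ - t * (ℓ₁ - ℓ₃) = ℓ₁ - s * (ℓ₁ - ℓ₃) := mul_left_cancel₀ hc.ne' h
  have hD : ℓ₁ - ℓ₃ ≠ 0 := by linarith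
  have : s * (ℓ₁ - ℓ₃) = t * (ℓ₁ - ℓ₃) := by linarith
  exact mul_right_cancel₀ hD this

lemma phi_hasDeriv (h0 : 0 < ℓ₃) (h3 : ℓ₃ < ℓ₁) {t : ℝ} (ht : t ∈ Ioo (0:ℝ) 1) :
    HasDerivAt (fun t : ℝ => ℓ₁ * ℓ₃ / (ℓ₁ - t * (ℓ₁ - ℓ₃)))
      (ℓ₁ * ℓ₃ * (ℓ₁ - ℓ₃) / (ℓ₁ - t * (ℓ₁ - ℓ₃))^2) t := by
  have hP : 0 < ℓ₁ - t * (ℓ₁ - ℓ₃) := h0.trans (P_mem h0 h3 ht).1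
  have hden : HasDerivAt (fun t : ℝ => ℓ₁ - t * (ℓ₁ - ℓ₃)) (-(ℓ₁ - ℓ₃)) t := by
    simpa using ((hasDerivAt_id t).mul_const (ℓ₁ - ℓ₃)).const_sub ℓ₁
  have := (hasDerivAt_const t (ℓ₁ * ℓ₃)).div hden hP.ne'
  exact this.congr_deriv (by ring)

/-- the pointwise algebraic identity after substitution. -/
lemma kernel_subst (ha : 0 < S + X) (hb : 0 < S - X)
    (h0 : 0 < ℓ₃) (h3 : ℓ₃ < ℓ₁) {t : ℝ} (ht : t ∈ Ioo (0:ℝ) 1) (v : ℝ) :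
    |ℓ₁ * ℓ₃ * (ℓ₁ - ℓ₃) / (ℓ₁ - t * (ℓ₁ - ℓ₃))^2| *
      (kerA S X ℓ₃ (ℓ₁ * ℓ₃ / (ℓ₁ - t * (ℓ₁ - ℓ₃))) ℓ₁ * v
        * (1 / (ℓ₁ * ℓ₃ / (ℓ₁ - t * (ℓ₁ - ℓ₃)))))
    = (1 / realBeta (S + X) (S - X)) * (t ^ (S + X - 1) * (1 - t) ^ (S - X - 1))
        * ((ℓ₁ / (ℓ₁ - t * (ℓ₁ - ℓ₃))) ^ (S - X) * v) := by
  obtain ⟨ht0, ht1⟩ := ht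
  have h1t : 0 < 1 - t := by linarith
  have hl1 : 0 < ℓ₁ := h0.trans h3
  have hD : 0 < ℓ₁ - ℓ₃ := by linarith
  set P := ℓ₁ - t * (ℓ₁ - ℓ₃) with hPdef
  have hPm := P_mem h0 h3 ⟨ht0, ht1⟩
  have hP : 0 < P := h0.trans hPm.1
  have habs : |ℓ₁ * ℓ₃ * (ℓ₁ - ℓ₃) / P^2| = ℓ₁ * ℓ₃ * (ℓ₁ - ℓ₃) / P^2 :=
    abs_of_pos (by positivity)
  have e1 : 1 - (ℓ₁ * ℓ₃ / P) / ℓ₁ = (1 - t) * (ℓ₁ - ℓ₃) / P := by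
    rw [hPdef]; have hPne : ℓ₁ - t * (ℓ₁ - ℓ₃) ≠ 0 := hP.ne'; field_simp; ring
  have e2 : 1 - ℓ₃ / (ℓ₁ * ℓ₃ / P) = t * (ℓ₁ - ℓ₃) / ℓ₁ := by
    rw [hPdef]; field_simp; ring
  have e3 : 1 - ℓ₃ / ℓ₁ = (ℓ₁ - ℓ₃) / ℓ₁ := by field_simp
  have e5 : 1 / (ℓ₁ * ℓ₃ / P) = P / (ℓ₁ * ℓ₃) := by
    rw [one_div_div]
  rw [habs, kerA, e1, e2, e3, e5]
  have core : ℓ₁ * ℓ₃ * (ℓ₁ - ℓ₃) / P^2 *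
      (((1 - t) * (ℓ₁ - ℓ₃) / P) ^ (S - X - 1) * ((t * (ℓ₁ - ℓ₃) / ℓ₁) ^ (S + X - 1)
        * (((ℓ₁ - ℓ₃) / ℓ₁) ^ (1 - 2*S) * (P / (ℓ₁ * ℓ₃)))))
      = t ^ (S + X - 1) * (1 - t) ^ (S - X - 1) * (ℓ₁ / P) ^ (S - X) := by
    rw [Real.rpow_def_of_pos (by positivity), Real.rpow_def_of_pos (by positivity),
      Real.rpow_def_of_pos (by positivity), Real.rpow_def_of_pos ht0,
      Real.rpow_def_of_pos h1t, Real.rpow_def_of_pos (by positivity),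
      ← Real.exp_log (show (0:ℝ) < ℓ₁ * ℓ₃ * (ℓ₁ - ℓ₃) / P^2 by positivity),
      ← Real.exp_log (show (0:ℝ) < P / (ℓ₁ * ℓ₃) by positivity)]
    simp only [← Real.exp_add]
    rw [Real.exp_eq_exp]
    rw [Real.log_div (by positivity : (0:ℝ) < ℓ₁*ℓ₃*(ℓ₁-ℓ₃)).ne' (by positivity : (0:ℝ) < P^2).ne',
      Real.log_mul (by positivity : (0:ℝ) < ℓ₁*ℓ₃).ne' hD.ne',
      Real.log_mul hl1.ne' h0.ne', Real.log_pow,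
      Real.log_div (by positivity : (0:ℝ) < (1-t)*(ℓ₁-ℓ₃)).ne' hP.ne',
      Real.log_mul h1t.ne' hD.ne',
      Real.log_div (by positivity : (0:ℝ) < t*(ℓ₁-ℓ₃)).ne' hl1.ne',
      Real.log_mul ht0.ne' hD.ne',
      Real.log_div hD.ne' hl1.ne',
      Real.log_div hP.ne' (by positivity : (0:ℝ) < ℓ₁*ℓ₃).ne',
      Real.log_mul hl1.ne' h0.ne',
      Real.log_div hl1.ne' hP.ne']
    push_cast
    ring
  calc ℓ₁ * ℓ₃ * (ℓ₁ - ℓ₃) / P^2 *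
      (1 / realBeta (S + X) (S - X) * ((1 - t) * (ℓ₁ - ℓ₃) / P) ^ (S - X - 1)
        * (t * (ℓ₁ - ℓ₃) / ℓ₁) ^ (S + X - 1) * ((ℓ₁ - ℓ₃) / ℓ₁) ^ (1 - 2*S) * v
        * (P / (ℓ₁ * ℓ₃)))
      = (1 / realBeta (S + X) (S - X)) * v *
        (ℓ₁ * ℓ₃ * (ℓ₁ - ℓ₃) / P^2 *
          (((1 - t) * (ℓ₁ - ℓ₃) / P) ^ (S - X - 1) * ((t * (ℓ₁ - ℓ₃) / ℓ₁) ^ (S + X - 1)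
            * (((ℓ₁ - ℓ₃) / ℓ₁) ^ (1 - 2*S) * (P / (ℓ₁ * ℓ₃)))))) := by ring
    _ = (1 / realBeta (S + X) (S - X)) * v *
          (t ^ (S + X - 1) * (1 - t) ^ (S - X - 1) * (ℓ₁ / P) ^ (S - X)) := by rw [core]
    _ = (1 / realBeta (S + X) (S - X)) * (t ^ (S + X - 1) * (1 - t) ^ (S - X - 1))
        * ((ℓ₁ / P) ^ (S - X) * v) := by ring

lemma integral_subst (ha : 0 < S + X) (hb : 0 < S - X)
    (h0 : 0 < ℓ₃) (h3 : ℓ₃ < ℓ₁) (f : ℝ → ℝ) :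
    ∫ ℓ₂ in ℓ₃..ℓ₁, kerA S X ℓ₃ ℓ₂ ℓ₁ * f ℓ₂ * (1 / ℓ₂)
      = ∫ t in Ioo (0:ℝ) 1, (1 / realBeta (S + X) (S - X))
          * (t ^ (S + X - 1) * (1 - t) ^ (S - X - 1))
          * ((ℓ₁ / (ℓ₁ - t * (ℓ₁ - ℓ₃))) ^ (S - X)
            * f (ℓ₁ * ℓ₃ / (ℓ₁ - t * (ℓ₁ - ℓ₃)))) := by
  rw [intervalIntegral.integral_of_le h3.le, MeasureTheory.integral_Ioc_eq_integral_Ioo,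
    ← phi_image h0 h3,
    integral_image_eq_integral_abs_deriv_smul measurableSet_Ioo
      (fun x hx => (phi_hasDeriv h0 h3 hx).hasDerivWithinAt)
      (phi_injOn h0 h3)]
  refine setIntegral_congr_fun measurableSet_Ioo fun t ht => ?_
  simp only [smul_eq_mul]
  exact kernel_subst ha hb h0 h3 ht (f _)

end subst

/-- The kernel `A_{S,X}(ℓ₃,·,ℓ₁)` acts as an approximate delta function at `ℓ₁`:
for any left-continuous `f` on `ℝ_{≥1}`,
`lim_{ℓ₃→ℓ₁⁻} ∫_{ℓ₃}^{ℓ₁} A_{S,X}(ℓ₃,ℓ₂,ℓ₁) f(ℓ₂) dℓ₂/ℓ₂ = f(ℓ₁)`. -/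
theorem kerA_delta_function (S X : ℝ) (hS : 0 < S) (hX : |X| < S)
    (ℓ₁ : ℝ) (hℓ₁ : 1 < ℓ₁) (f : ℝ → ℝ)
    (hf : ∀ x : ℝ, 1 ≤ x → ContinuousWithinAt f (Set.Iic x) x) :
    Filter.Tendsto
      (fun ℓ₃ : ℝ => ∫ ℓ₂ in ℓ₃..ℓ₁, kerA S X ℓ₃ ℓ₂ ℓ₁ * f ℓ₂ * (1 / ℓ₂))
      (nhdsWithin ℓ₁ (Set.Ico 1 ℓ₁)) (nhds (f ℓ₁)) := by
  obtain ⟨hX1, hX2⟩ := abs_lt.mp hX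
  have ha : 0 < S + X := by linarith
  have hb : 0 < S - X := by linarith
  have hl1 : (0:ℝ) < ℓ₁ := by linarith
  set B := realBeta (S + X) (S - X) with hBdef
  have hB : 0 < B := by
    rw [hBdef, realBeta]
    have := Real.Gamma_pos_of_pos ha
    have := Real.Gamma_pos_of_pos hb
    have := Real.Gamma_pos_of_pos (show (0:ℝ) < S + X + (S - X) by linarith)
    positivity
  set w : ℝ → ℝ := fun t => t ^ (S + X - 1) * (1 - t) ^ (S - X - 1) with hwdef
  have hw_int : IntegrableOn w (Ioo 0 1) := betaFn_integrableOn ha hb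
  have hw_integral : ∫ t in Ioo (0:ℝ) 1, w t = B := betaFn_integral ha hb
  have hw_nonneg : ∀ t ∈ Ioo (0:ℝ) 1, 0 ≤ w t := by
    intro t ht
    have : (0:ℝ) < 1 - t := by linarith [ht.2]
    have h0 := ht.1
    rw [hwdef]
    positivity
  have hw_meas : Measurable w := (measurable_id.pow_const _).mul ((measurable_const.sub measurable_id).pow_const _)
  rw [Metric.tendsto_nhds]
  intro ε hε
  -- continuity data
  obtain ⟨δ₀, hδ₀pos, hδ₀⟩ := Metric.tendsto_nhdsWithin_nhds.mp (hf ℓ₁ hℓ₁.le) (ε/4)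
    (by positivity)
  -- eventual bound on M
  have hMten : Tendsto (fun x : ℝ => (ℓ₁ / x) ^ (S - X)) (nhdsWithin ℓ₁ (Ico 1 ℓ₁))
      (nhds 1) := by
    have c1 : ContinuousAt (fun x : ℝ => (ℓ₁ / x) ^ (S - X)) ℓ₁ := by
      refine ContinuousAt.rpow_const ?_ (Or.inr hb.le)
      exact continuousAt_const.div continuousAt_id hl1.ne'
    have := c1.tendsto.mono_left (nhdsWithin_le_nhds (s := Ico 1 ℓ₁))
    simpa [div_self hl1.ne', Real.one_rpow] using this
  have hMev : ∀ᶠ ℓ₃ in nhdsWithin ℓ₁ (Ico 1 ℓ₁),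
      (ℓ₁ / ℓ₃) ^ (S - X) < min 2 (1 + ε / (4 * (|f ℓ₁| + 1))) := by
    refine hMten.eventually_lt_const ?_
    refine lt_min one_lt_two ?_
    have : 0 < ε / (4 * (|f ℓ₁| + 1)) := by positivity
    linarith
  have hclose : ∀ᶠ ℓ₃ in nhdsWithin ℓ₁ (Ico 1 ℓ₁), ℓ₁ - δ₀ < ℓ₃ :=
    eventually_nhdsWithin_of_eventually_nhds (eventually_gt_nhds (by linarith))
  filter_upwards [self_mem_nhdsWithin, hMev, hclose] with ℓ₃ hmem hM hcl
  obtain ⟨h1, h3⟩ := hmem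
  have h0 : 0 < ℓ₃ := by linarith
  have hD : 0 < ℓ₁ - ℓ₃ := by linarith
  rw [integral_subst ha hb h0 h3 f]
  set M := (ℓ₁ / ℓ₃) ^ (S - X) with hMdef
  have hM1 : 1 ≤ M := Real.one_le_rpow (by rw [le_div_iff₀ h0]; linarith) hb.le
  have hM2 : M < 2 := lt_of_lt_of_le hM (min_le_left _ _)
  have hM3 : M < 1 + ε / (4 * (|f ℓ₁| + 1)) := lt_of_lt_of_le hM (min_le_right _ _)
  set φ : ℝ → ℝ := fun t => ℓ₁ * ℓ₃ / (ℓ₁ - t * (ℓ₁ - ℓ₃)) with hφdef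
  set c : ℝ → ℝ := fun t => (ℓ₁ / (ℓ₁ - t * (ℓ₁ - ℓ₃))) ^ (S - X) with hcdef
  have hφmem : ∀ t ∈ Ioo (0:ℝ) 1, φ t ∈ Ioo ℓ₃ ℓ₁ := fun t ht => phi_mem h0 h3 ht
  have hc_bounds : ∀ t ∈ Ioo (0:ℝ) 1, 1 ≤ c t ∧ c t ≤ M := by
    intro t ht
    have hPm := P_mem h0 h3 ht
    have hP : 0 < ℓ₁ - t * (ℓ₁ - ℓ₃) := h0.trans hPm.1
    constructor
    · exact Real.one_le_rpow (by rw [le_div_iff₀ hP]; linarith [hPm.2]) hb.le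
    · refine Real.rpow_le_rpow (by positivity) ?_ hb.le
      exact div_le_div_of_nonneg_left hl1.le h0 hPm.1.le
  have hf_close : ∀ t ∈ Ioo (0:ℝ) 1, |f (φ t) - f ℓ₁| ≤ ε/4 := by
    intro t ht
    have hm := hφmem t ht
    refine (le_of_lt ?_)
    have := hδ₀ (show φ t ∈ Iic ℓ₁ from hm.2.le)
      (show dist (φ t) ℓ₁ < δ₀ by
        rw [Real.dist_eq, abs_of_nonpos (by linarith [hm.2])]
        linarith [hm.1])
    rwa [Real.dist_eq] at this
  -- the integrand
  set G : ℝ → ℝ := fun t => (1/B) * w t * (c t * f (φ t)) with hGdef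
  have hc_meas : Measurable c := (measurable_const.div (measurable_const.sub (measurable_id.mul_const _))).pow_const _
  have hφ_meas : Measurable φ := measurable_const.div (measurable_const.sub (measurable_id.mul_const _))
  have hfφ : AEMeasurable (fun t => f (φ t)) (volume.restrict (Ioo 0 1)) :=
    aemeasurable_comp_of_leftCont f hf hφ_meas measurableSet_Ioo
      (fun t ht => by linarith [(hφmem t ht).1])
  have hG_meas : AEStronglyMeasurable G (volume.restrict (Ioo 0 1)) := by
    rw [hGdef]
    exact ((((hw_meas.const_mul (1/B)).aemeasurable).mul
      (hc_meas.aemeasurable.mul hfφ))).aestronglyMeasurable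
  have hfφ_bound : ∀ t ∈ Ioo (0:ℝ) 1, |f (φ t)| ≤ |f ℓ₁| + ε/4 := by
    intro t ht
    have := hf_close t ht
    have := abs_sub_abs_le_abs_sub (f (φ t)) (f ℓ₁)
    linarith
  have hwB_int : IntegrableOn (fun t => (1/B) * w t) (Ioo 0 1) := hw_int.const_mul _
  have hG_int : IntegrableOn G (Ioo 0 1) := by
    refine Integrable.mono' (g := fun t => (1/B) * w t * (M * (|f ℓ₁| + ε/4)))
      (hwB_int.mul_const _) hG_meas ?_
    rw [ae_restrict_iff' measurableSet_Ioo]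
    refine Eventually.of_forall fun t ht => ?_
    have hwt := hw_nonneg t ht
    have hcb := hc_bounds t ht
    have hfb := hfφ_bound t ht
    rw [hGdef]
    simp only [Real.norm_eq_abs]
    rw [abs_mul, abs_of_nonneg (by positivity : (0:ℝ) ≤ 1/B * w t)]
    refine mul_le_mul_of_nonneg_left ?_ (by positivity)
    rw [abs_mul, abs_of_nonneg (by linarith [hcb.1] : (0:ℝ) ≤ c t)]
    have h1 : |f (φ t)| ≤ |f ℓ₁| + ε/4 := hfb
    nlinarith [hcb.1, hcb.2, abs_nonneg (f (φ t))]
  have hwB_integral : ∫ t in Ioo (0:ℝ) 1, (1/B) * w t = 1 := by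
    rw [MeasureTheory.integral_const_mul, hw_integral]
    field_simp
  have hconst_integral : ∫ t in Ioo (0:ℝ) 1, (1/B) * w t * f ℓ₁ = f ℓ₁ := by
    rw [MeasureTheory.integral_mul_const, hwB_integral, one_mul]
  set Cb := M * (ε/4) + (M - 1) * |f ℓ₁| with hCbdef
  have hCb_nonneg : 0 ≤ Cb := by
    rw [hCbdef]
    have : 0 ≤ M - 1 := by linarith
    have : 0 ≤ M := by linarith
    positivity
  have hptwise : ∀ t ∈ Ioo (0:ℝ) 1, |G t - (1/B) * w t * f ℓ₁| ≤ (1/B) * w t * Cb := by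
    intro t ht
    have hwt := hw_nonneg t ht
    have hcb := hc_bounds t ht
    have hfc := hf_close t ht
    have key : |c t * f (φ t) - f ℓ₁| ≤ Cb := by
      have hid : c t * f (φ t) - f ℓ₁ = c t * (f (φ t) - f ℓ₁) + (c t - 1) * f ℓ₁ := by
        ring
      rw [hid]
      refine (abs_add_le _ _).trans ?_
      rw [abs_mul, abs_mul, hCbdef,
        abs_of_nonneg (by linarith [hcb.1] : (0:ℝ) ≤ c t),
        abs_of_nonneg (by linarith [hcb.1] : (0:ℝ) ≤ c t - 1)]
      have := abs_nonneg (f (φ t) - f ℓ₁)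
      have := abs_nonneg (f ℓ₁)
      nlinarith [hcb.1, hcb.2]
    calc |G t - (1/B) * w t * f ℓ₁| = (1/B) * w t * |c t * f (φ t) - f ℓ₁| := by
          rw [hGdef]
          rw [show (1/B) * w t * (c t * f (φ t)) - (1/B) * w t * f ℓ₁
              = (1/B) * w t * (c t * f (φ t) - f ℓ₁) by ring, abs_mul,
            abs_of_nonneg (by positivity : (0:ℝ) ≤ 1/B * w t)]
      _ ≤ (1/B) * w t * Cb := mul_le_mul_of_nonneg_left key (by positivity)
  have hdiff : |(∫ t in Ioo (0:ℝ) 1, G t) - f ℓ₁| ≤ Cb := by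
    rw [← hconst_integral, ← MeasureTheory.integral_sub hG_int (hwB_int.mul_const _)]
    have hbnd : ‖∫ t in Ioo (0:ℝ) 1, (G t - (1/B) * w t * f ℓ₁)‖
        ≤ ∫ t in Ioo (0:ℝ) 1, (1/B) * w t * Cb := by
      refine norm_integral_le_of_norm_le (hwB_int.mul_const _) ?_
      rw [ae_restrict_iff' measurableSet_Ioo]
      exact Eventually.of_forall fun t ht => hptwise t ht
    rw [Real.norm_eq_abs] at hbnd
    refine hbnd.trans ?_
    rw [MeasureTheory.integral_mul_const, hwB_integral, one_mul]
  rw [Real.dist_eq]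
  refine lt_of_le_of_lt hdiff ?_
  rw [hCbdef]
  have habs : (M - 1) * |f ℓ₁| ≤ (M - 1) * (|f ℓ₁| + 1) :=
    mul_le_mul_of_nonneg_left (by linarith) (by linarith)
  have h2 : (M - 1) * (|f ℓ₁| + 1) < ε/4 := by
    have hpos : 0 < |f ℓ₁| + 1 := by positivity
    have := hM3
    rw [show (1:ℝ) + ε / (4 * (|f ℓ₁| + 1)) = 1 + ε / (4 * (|f ℓ₁| + 1)) from rfl] at this
    have hlt : M - 1 < ε / (4 * (|f ℓ₁| + 1)) := by linarith
    calc (M - 1) * (|f ℓ₁| + 1) < ε / (4 * (|f ℓ₁| + 1)) * (|f ℓ₁| + 1) :=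
          mul_lt_mul_of_pos_right hlt hpos
      _ = ε/4 := by field_simp
  have h4 : M * (ε/4) < 2 * (ε/4) := mul_lt_mul_of_pos_right hM2 (by positivity)
  linarith
end

section
/- Define for nonnegative integers the Schur-degeneration vertex weights W(i₁,j₁;i₂,j₂) = 1_{i₁+j₁=i₂+j₂}·1_{i₁≥j₂}·x^{j₂}, W*(i₁,j₁;i₂,j₂) = 1_{i₁+j₂=i₂+j₁}·1_{i₂≥j₂}·y^{j₂}, and cross weight R(i₁,j₁;i₂,j₂) = 1_{i₂+j₁=i₁+j₂}·(xy)^{min(j₁,j₂)}. Fix nonnegative integers i₁,i₂,i₃,j₁,j₂,j₃. Then the map k₁ ↦ k₁' := j₁ − min(j₁,j₂) + min(k₁, i₂+k₁−i₁) is a weight-preserving bijection between the terms of the two sides of the corresponding Yang–Baxter equation; concretely, for every k₁ for which the arrow-preservation constraints and indicator constraints on the left-hand side hold (with k₂ = i₂+k₁−i₁, k₃ = i₃+j₁−k₁, requiring k₃ ≥ max(j₁,j₂)), the constraints on the right-hand side hold for k₁' (with k₂' = j₂+k₁'−j₁, k₃' = i₁+j₃−k₁', requiring i₃ ≥ k₂'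 and j₃ ≥ k₁'), and moreover x^{j₂} y^{j₁} (xy)^{min(k₁,k₂)} = (xy)^{min(j₁,j₂)} x^{k₂'} y^{k₁'}. -/
/-- Bijectivization of the Schur (q = s = 0) Yang–Baxter equation underlying RSK:
given external indices `i₁,i₂,i₃,j₁,j₂,j₃ ≥ 0` and an internal index `k₁`
satisfying the left-hand-side arrow-preservation and indicator constraints
(with `k₂ = i₂+k₁−i₁`, `k₃ = i₃+j₁−k₁`, `k₃+k₂ = j₃+j₂`, `k₃ ≥ max(j₁,j₂)`),
the index `k₁' = j₁ − min(j₁,j₂) + min(k₁,k₂)` satisfies the right-hand-side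
constraints (with `k₂' = j₂+k₁'−j₁`, `k₃' = i₁+j₃−k₁'`, requiring `i₃ ≥ k₂'`
and `j₃ ≥ k₁'`), and the weights match:
`x^{j₂} y^{j₁} (xy)^{min(k₁,k₂)} = (xy)^{min(j₁,j₂)} x^{k₂'} y^{k₁'}`. -/
theorem schur_YBE_bijection (x y : ℝ) (hx : 0 < x) (hy : 0 < y)
    (i₁ i₂ i₃ j₁ j₂ j₃ k₁ k₂ k₃ k₁' k₂' k₃' : ℤ)
    (hi₁ : 0 ≤ i₁) (hi₂ : 0 ≤ i₂) (hi₃ : 0 ≤ i₃)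
    (hj₁ : 0 ≤ j₁) (hj₂ : 0 ≤ j₂) (hj₃ : 0 ≤ j₃) (hk₁ : 0 ≤ k₁)
    (hk₂def : k₂ = i₂ + k₁ - i₁) (hk₂ : 0 ≤ k₂)
    (hk₃def : k₃ = i₃ + j₁ - k₁) (hk₃ : 0 ≤ k₃)
    (hcons : k₃ + k₂ = j₃ + j₂)
    (hk₃j₁ : j₁ ≤ k₃) (hk₃j₂ : j₂ ≤ k₃)
    (hk₁'def : k₁' = j₁ - min j₁ j₂ + min k₁ k₂)
    (hk₂'def : k₂' = j₂ + k₁' - j₁)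
    (hk₃'def : k₃' = i₁ + j₃ - k₁') :
    0 ≤ k₁' ∧ 0 ≤ k₂' ∧ 0 ≤ k₃' ∧ k₂' ≤ i₃ ∧ k₁' ≤ j₃ ∧
      x ^ j₂ * y ^ j₁ * (x * y) ^ (min k₁ k₂)
        = (x * y) ^ (min j₁ j₂) * x ^ k₂' * y ^ k₁' := by
  have hx' : x ≠ 0 := hx.ne'
  have hy' : y ≠ 0 := hy.ne'
  refine ⟨by omega, by omega, by omega, by omega, by omega, ?_⟩
  have h1 : k₂' = j₂ - min j₁ j₂ + min k₁ k₂ := by omega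
  have h2 : k₁' = j₁ - min j₁ j₂ + min k₁ k₂ := hk₁'def
  rw [h1, h2, mul_zpow, mul_zpow, zpow_add₀ hx', zpow_add₀ hy',
    zpow_sub₀ hx', zpow_sub₀ hy']
  field_simp
end

section
/- Let q ∈ (0,1) and consider the operator M defined on functions of one variable by (Mf)(x) = f(q^{-1}x) (i.e., T_{q^{-1},x}), and the first-order spin q-Whittaker operators on symmetric polynomials in N variables: 𝔇₁ = ∑_{i=1}^N ∏_{j≠i} (1+s x_i)/(1 − x_i/x_j) · T_{q,x_i} and 𝔇̄₁ = ∑_{i=1}^N ∏_{j≠i} (1+s/x_i)/(1 − x_j/x_i) · T_{q^{-1},x_i}. Then for N = 2 and any symmetric polynomial F(x₁,x₂), 𝔇₁𝔇̄₁F = 𝔇̄₁𝔇₁F. -/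
/-- The first spin q-Whittaker difference operator for `N = 2`:
`(𝔇₁F)(x₁,x₂) = (1+sx₁)/(1−x₁/x₂)·F(qx₁,x₂) + (1+sx₂)/(1−x₂/x₁)·F(x₁,qx₂)`. -/
noncomputable def D1 (q s : ℝ) (F : ℝ → ℝ → ℝ) : ℝ → ℝ → ℝ := fun x₁ x₂ =>
  (1 + s * x₁) / (1 - x₁ / x₂) * F (q * x₁) x₂
    + (1 + s * x₂) / (1 - x₂ / x₁) * F x₁ (q * x₂)

/-- The second spin q-Whittaker difference operator for `N = 2`:
`(𝔇̄₁F)(x₁,x₂) = (1+s/x₁)/(1−x₂/x₁)·F(q⁻¹x₁,x₂) + (1+s/x₂)/(1−x₁/x₂)·F(x₁,q⁻¹x₂)`. -/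
noncomputable def Dbar1 (q s : ℝ) (F : ℝ → ℝ → ℝ) : ℝ → ℝ → ℝ := fun x₁ x₂ =>
  (1 + s / x₁) / (1 - x₂ / x₁) * F (q⁻¹ * x₁) x₂
    + (1 + s / x₂) / (1 - x₁ / x₂) * F x₁ (q⁻¹ * x₂)

/-!
Both composites are combinations of `F` at the three points `(x₁, x₂)`, `(q x₁, q⁻¹ x₂)` and
`(q⁻¹ x₁, q x₂)`, because a shift by `q` followed by a shift by `q⁻¹` in the same variable cancels.
The coefficients of the two mixed points are the same product of two factors taken in either order.
The coefficients of `F x₁ x₂` differ term by term and agree only as a sum, by a rational-function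
identity in `x₁, x₂, q, s`.
-/

noncomputable section

variable (q s x₁ x₂ : ℝ)

def crossCoeff : ℝ := (1 + s * x₁) / (1 - x₁ / x₂) * ((1 + s / x₂) / (1 - q * x₁ / x₂))

def diagCoeff : ℝ :=
  (1 + s * x₁) / (1 - x₁ / x₂) * ((1 + s / (q * x₁)) / (1 - x₂ / (q * x₁)))
    + (1 + s * x₂) / (1 - x₂ / x₁) * ((1 + s / (q * x₂)) / (1 - x₁ / (q * x₂)))

def diagCoeffBar : ℝ :=
  (1 + s / x₁) / (1 - x₂ / x₁) * ((1 + s * (q⁻¹ * x₁)) / (1 - q⁻¹ * x₁ / x₂))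
    + (1 + s / x₂) / (1 - x₁ / x₂) * ((1 + s * (q⁻¹ * x₂)) / (1 - q⁻¹ * x₂ / x₁))

variable {q} (F : ℝ → ℝ → ℝ)

theorem D1_Dbar1_apply (hq : q ≠ 0) :
    D1 q s (Dbar1 q s F) x₁ x₂ = diagCoeff q s x₁ x₂ * F x₁ x₂
      + crossCoeff q s x₁ x₂ * F (q * x₁) (q⁻¹ * x₂)
      + crossCoeff q s x₂ x₁ * F (q⁻¹ * x₁) (q * x₂) := by
  simp only [D1, Dbar1, diagCoeff, crossCoeff, inv_mul_cancel_left₀ hq]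
  ring

theorem Dbar1_D1_apply (hq : q ≠ 0) :
    Dbar1 q s (D1 q s F) x₁ x₂ = diagCoeffBar q s x₁ x₂ * F x₁ x₂
      + crossCoeff q s x₁ x₂ * F (q * x₁) (q⁻¹ * x₂)
      + crossCoeff q s x₂ x₁ * F (q⁻¹ * x₁) (q * x₂) := by
  simp only [D1, Dbar1, diagCoeffBar, crossCoeff, mul_inv_cancel_left₀ hq, div_mul_eq_div_div,
    div_inv_eq_mul]
  ring

theorem diagCoeff_eq_diagCoeffBar (hq : q ≠ 0) (h₁ : x₁ ≠ 0) (h₂ : x₂ ≠ 0) (h₁₂ : x₁ ≠ x₂)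
    (hq₁ : q * x₁ ≠ x₂) (hq₂ : x₁ ≠ q * x₂) :
    diagCoeff q s x₁ x₂ = diagCoeffBar q s x₁ x₂ := by
  have : x₁ - x₂ ≠ 0 := sub_ne_zero.mpr h₁₂
  have : x₂ - x₁ ≠ 0 := sub_ne_zero.mpr h₁₂.symm
  have : x₁ * q - x₂ ≠ 0 := sub_ne_zero.mpr (by rwa [mul_comm])
  have : x₂ * q - x₁ ≠ 0 := sub_ne_zero.mpr (by rw [mul_comm]; exact hq₂.symm)
  unfold diagCoeff diagCoeffBar
  field_simp
  ring

end

theorem D1_Dbar1_comm_general (q s : ℝ) (hq : q ∈ Set.Ioo (0 : ℝ) 1)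
    (P : MvPolynomial (Fin 2) ℝ)
    (x₁ x₂ : ℝ) (h₁ : x₁ ≠ 0) (h₂ : x₂ ≠ 0) (h₁₂ : x₁ ≠ x₂)
    (hq₁ : q * x₁ ≠ x₂) (hq₂ : x₁ ≠ q * x₂) :
    D1 q s (Dbar1 q s (fun a b => MvPolynomial.eval ![a, b] P)) x₁ x₂
      = Dbar1 q s (D1 q s (fun a b => MvPolynomial.eval ![a, b] P)) x₁ x₂ := by
  have hq₀ : q ≠ 0 := hq.1.ne'
  rw [D1_Dbar1_apply _ _ _ _ hq₀, Dbar1_D1_apply _ _ _ _ hq₀,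
    diagCoeff_eq_diagCoeffBar _ _ _ hq₀ h₁ h₂ h₁₂ hq₁ hq₂]

/-- For `N = 2`, the operators `𝔇₁` and `𝔇̄₁` commute on any symmetric
polynomial `F(x₁,x₂)` (as an identity of rational functions, i.e. wherever
the denominators are nonzero). -/
theorem D1_Dbar1_comm (q s : ℝ) (hq : q ∈ Set.Ioo (0 : ℝ) 1)
    (P : MvPolynomial (Fin 2) ℝ)
    (hsym : ∀ a b : ℝ, MvPolynomial.eval ![a, b] P = MvPolynomial.eval ![b, a] P)
    (x₁ x₂ : ℝ) (h₁ : x₁ ≠ 0) (h₂ : x₂ ≠ 0) (h₁₂ : x₁ ≠ x₂)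
    (hq₁ : q * x₁ ≠ x₂) (hq₂ : x₁ ≠ q * x₂) :
    D1 q s (Dbar1 q s (fun a b => MvPolynomial.eval ![a, b] P)) x₁ x₂
      = Dbar1 q s (D1 q s (fun a b => MvPolynomial.eval ![a, b] P)) x₁ x₂ :=
  D1_Dbar1_comm_general q s hq P x₁ x₂ h₁ h₂ h₁₂ hq₁ hq₂
end
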